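/- arXiv:1206.2588 — 4 statements merged into one kernel-verified Lean document; each statement's English description precedes it below -/
import Mathlib

section
/- Let M ≥ 2, N = 2M, let L be an integer with 3 ≤ L ≤ N − 2, and let α_1,…,α_N, β_1,…,β_N be real numbers. Define real numbers A_1,…,A_N by: A_1 = π − α_N − β_N − β_2; A_k = α_{k−1} + β_{k−1} − β_{k+1} for k ∈ {2,…,L−2} ∪ {L+1,…,N−1}; A_{L−1} = −π + α_{L−2} + β_{L−2} + β_L; A_L = π − α_{L−1} − β_{L−1} − β_{L+1}; A_N = −π + α_{N−1} + β_{N−1} + β_1. If Σ_{k=1}^{L−1} α_k − Σ_{k=L}^{N} α_k = 0 and Σ_{k=1}^{L−1} (−1)^{k+1} α_k − Σ_{k=L}^{N} (−1)^{k+1} α_k = 0, then also Σ_{k=1}^{L−1} A_k − Σ_{k=L}^{N} A_k = 0 and Σ_{k=1}^{L−1} (−1)^{k+1} A_k − Σ_{k=L}^{N} (−1)^{k+1} A_k = 0. -/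
open Real Finset

/-!
Weight the `k`-th angle by `ε ^ (k + 1)` with `ε = ±1`; for `ε = 1` and `ε = -1` the signed sum
`foldingDefect` is the left-hand side of the first and second condition (7). On the arcs
`2, …, L - 2` and `L + 1, …, N - 1` we have `A k = α (k - 1) + β (k - 1) - β (k + 1)`, so there the
weighted sum of `A` is `ε` times the weighted sum of `α` over the arc shifted by one, plus a sum of
`β` that telescopes with step two since `ε ^ 2 = 1`. The four exceptional angles `A 1`, `A (L - 1)`,
`A L`, `A N` supply exactly the missing `α`-terms and cancel the telescoped ends, so the defect of
`A` is `ε` times the defect of `α`.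
-/

theorem Finset.sum_Icc_sub_add_two {G : Type*} [AddCommGroup G] (f : ℕ → G) {m n : ℕ}
    (hmn : m ≤ n + 1) :
    ∑ i ∈ Icc m n, (f i - f (i + 2)) = f m + f (m + 1) - f (n + 1) - f (n + 2) := by
  have := sum_Ico_sub (fun i ↦ -(f i + f (i + 1))) hmn
  rw [Ico_add_one_right_eq_Icc] at this
  convert this using 1
  · exact sum_congr rfl fun i _ ↦ by abel
  · abel

theorem Finset.sum_Icc_add_one_add_one {M : Type*} [AddCommMonoid M] (f : ℕ → M) (m n : ℕ) :
    ∑ i ∈ Icc (m + 1) (n + 1), f i = ∑ i ∈ Icc m n, f (i + 1) := by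
  rw [← map_add_right_Icc, sum_map]
  rfl

theorem Finset.sum_Icc_eq_add_sum_add {M : Type*} [AddCommMonoid M] (f : ℕ → M) {m n : ℕ}
    (hmn : m ≤ n + 1) :
    ∑ i ∈ Icc m (n + 2), f i = f m + ∑ i ∈ Icc (m + 1) (n + 1), f i + f (n + 2) := by
  rw [sum_Icc_succ_top (by omega), ← add_sum_Ioc_eq_sum_Icc (by omega), Icc_add_one_left_eq_Ioc]

theorem sum_Icc_pow_mul_telescope {ε : ℝ} (hε : ε ^ 2 = 1) (α β A : ℕ → ℝ) {m n : ℕ}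
    (hmn : m ≤ n + 1)
    (hA : ∀ k ∈ Icc (m + 1) (n + 1), A k = α (k - 1) + β (k - 1) - β (k + 1)) :
    ∑ k ∈ Icc (m + 1) (n + 1), ε ^ (k + 1) * A k =
      ε * ∑ k ∈ Icc m n, ε ^ (k + 1) * α k +
        (ε ^ m * β m + ε ^ (m + 1) * β (m + 1) - ε ^ (n + 1) * β (n + 1) -
          ε ^ (n + 2) * β (n + 2)) := by
  rw [sum_congr rfl fun k hk ↦ by rw [hA k hk], sum_Icc_add_one_add_one, mul_sum,
    ← sum_Icc_sub_add_two (fun k ↦ ε ^ k * β k) hmn, ← sum_add_distrib]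
  refine sum_congr rfl fun k _ ↦ ?_
  simp only [add_tsub_cancel_right]
  linear_combination ε ^ k * β k * hε

def foldingDefect (ε : ℝ) (L N : ℕ) (f : ℕ → ℝ) : ℝ :=
  ∑ k ∈ Icc 1 (L - 1), ε ^ (k + 1) * f k - ∑ k ∈ Icc L N, ε ^ (k + 1) * f k

theorem foldingDefect_eq_mul {ε : ℝ} (hε : ε ^ 2 = 1) {N L : ℕ} (hN : Even N)
    (hL3 : 3 ≤ L) (hLN : L ≤ N - 2) (α β A : ℕ → ℝ)
    (hA1 : A 1 = π - α N - β N - β 2)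
    (hAk : ∀ k : ℕ, (2 ≤ k ∧ k ≤ L - 2) ∨ (L + 1 ≤ k ∧ k ≤ N - 1) →
      A k = α (k - 1) + β (k - 1) - β (k + 1))
    (hAL1 : A (L - 1) = -π + α (L - 2) + β (L - 2) + β L)
    (hAL : A L = π - α (L - 1) - β (L - 1) - β (L + 1))
    (hAN : A N = -π + α (N - 1) + β (N - 1) + β 1) :
    foldingDefect ε L N A = ε * foldingDefect ε L N α := by
  obtain ⟨a, rfl⟩ : ∃ a, L = a + 3 := ⟨L - 3, by omega⟩
  obtain ⟨c, rfl⟩ : ∃ c, N = c + 2 := ⟨N - 2, by omega⟩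
  have hεc : ε ^ c = 1 := by
    obtain ⟨p, rfl⟩ : Even c := by simpa [parity_simps] using hN
    rw [← two_mul, pow_mul, hε, one_pow]
  simp only [foldingDefect, show a + 3 - 1 = a + 2 by omega,
    show a + 3 - 2 = a + 1 by omega, show c + 2 - 1 = c + 1 by omega] at hAk hAL1 hAL hAN ⊢
  rw [sum_Icc_eq_add_sum_add _ (m := 1) (n := a) (by omega),
    sum_Icc_pow_mul_telescope hε α β A (by omega) fun k hk ↦ hAk k (by simp at hk; omega),
    sum_Icc_eq_add_sum_add _ (m := a + 3) (n := c) (by omega),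
    sum_Icc_pow_mul_telescope hε α β A (by omega) fun k hk ↦ hAk k (by simp at hk; omega),
    sum_Icc_succ_top (a := 1) (b := a + 1) (by omega), sum_Icc_succ_top (a := 1) (b := a) (by omega),
    sum_Icc_succ_top (a := a + 3) (b := c + 1) (by omega),
    sum_Icc_succ_top (a := a + 3) (b := c) (by omega), hA1, hAL1, hAL, hAN]
  simp only [pow_add, hεc, one_mul]
  -- the `π`-terms leave `(1 + ε) * (1 - ε ^ L)`, which vanishes only because `ε = ±1`
  rcases sq_eq_one_iff.mp hε with rfl | rfl <;> ring

theorem stmt_3_general (M : ℕ) (N : ℕ) (hN : N = 2 * M)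
    (L : ℕ) (hL3 : 3 ≤ L) (hLN : L ≤ N - 2)
    (α β A : ℕ → ℝ)
    (hA1 : A 1 = π - α N - β N - β 2)
    (hAk : ∀ k : ℕ, (2 ≤ k ∧ k ≤ L - 2) ∨ (L + 1 ≤ k ∧ k ≤ N - 1) →
      A k = α (k - 1) + β (k - 1) - β (k + 1))
    (hAL1 : A (L - 1) = -π + α (L - 2) + β (L - 2) + β L)
    (hAL : A L = π - α (L - 1) - β (L - 1) - β (L + 1))
    (hAN : A N = -π + α (N - 1) + β (N - 1) + β 1)
    (hα1 : ∑ k ∈ Icc 1 (L - 1), α k - ∑ k ∈ Icc L N, α k = 0)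
    (hα2 : ∑ k ∈ Icc 1 (L - 1), (-1 : ℝ) ^ (k + 1) * α k -
      ∑ k ∈ Icc L N, (-1 : ℝ) ^ (k + 1) * α k = 0) :
    ∑ k ∈ Icc 1 (L - 1), A k - ∑ k ∈ Icc L N, A k = 0 ∧
    ∑ k ∈ Icc 1 (L - 1), (-1 : ℝ) ^ (k + 1) * A k -
      ∑ k ∈ Icc L N, (-1 : ℝ) ^ (k + 1) * A k = 0 := by
  have hNeven : Even N := hN ▸ even_two_mul M
  have key (ε : ℝ) (hε : ε ^ 2 = 1) :=
    foldingDefect_eq_mul hε hNeven hL3 hLN α β A hA1 hAk hAL1 hAL hAN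
  constructor
  · simpa [foldingDefect, hα1] using key 1 (one_pow 2)
  · simpa [foldingDefect, hα2] using key (-1) (by norm_num)

/-- If the face angles `α` at the apical vertex `u` satisfy the two III-OAE
folding conditions (equations (7)), then the angles `A` at the other apical
vertex `w`, computed from the OAE/OAS vertex conditions, satisfy the same
two conditions. -/
theorem stmt_3 (M : ℕ) (hM : 2 ≤ M) (N : ℕ) (hN : N = 2 * M)
    (L : ℕ) (hL3 : 3 ≤ L) (hLN : L ≤ N - 2)
    (α β A : ℕ → ℝ)
    (hA1 : A 1 = π - α N - β N - β 2)
    (hAk : ∀ k : ℕ, (2 ≤ k ∧ k ≤ L - 2) ∨ (L + 1 ≤ k ∧ k ≤ N - 1) →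
      A k = α (k - 1) + β (k - 1) - β (k + 1))
    (hAL1 : A (L - 1) = -π + α (L - 2) + β (L - 2) + β L)
    (hAL : A L = π - α (L - 1) - β (L - 1) - β (L + 1))
    (hAN : A N = -π + α (N - 1) + β (N - 1) + β 1)
    (hα1 : ∑ k ∈ Icc 1 (L - 1), α k - ∑ k ∈ Icc L N, α k = 0)
    (hα2 : ∑ k ∈ Icc 1 (L - 1), (-1 : ℝ) ^ (k + 1) * α k -
      ∑ k ∈ Icc L N, (-1 : ℝ) ^ (k + 1) * α k = 0) :
    ∑ k ∈ Icc 1 (L - 1), A k - ∑ k ∈ Icc L N, A k = 0 ∧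
    ∑ k ∈ Icc 1 (L - 1), (-1 : ℝ) ^ (k + 1) * A k -
      ∑ k ∈ Icc L N, (-1 : ℝ) ^ (k + 1) * A k = 0 :=
  stmt_3_general M N hN L hL3 hLN α β A hA1 hAk hAL1 hAL hAN hα1 hα2
end

section
/- Let α_1, α_2, α_3, α_4, δ_1, δ_2, δ_3 ∈ ℝ, let A(α) and Φ(δ) be the 3×3 rotation matrices A(α) = [[cos α, −sin α, 0],[sin α, cos α, 0],[0,0,1]] and Φ(δ) = [[1,0,0],[0, cos δ, −sin δ],[0, sin δ, cos δ]], and let e_1 = (1,0,0). If A(α_1)·Φ(π−δ_2)·A(α_2)·Φ(π−δ_3)·A(α_3) applied to e_1 equals Φ(δ_1−π)·A(−α_4) applied to e_1, then sin α_1 cos α_2 sin α_3 cos δ_2 cos δ_3 − sin α_1 sin α_3 sin δ_2 sin δ_3 − sin α_1 sin α_2 cos α_3 cos δ_2 − cos α_1 sin α_2 sin α_3 cos δ_3 + cos α_4 − cos α_1 cos α_2 cos α_3 = 0. -/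
open Real Matrix

/-- Rotation about the z-axis by angle `α`. -/
noncomputable def Arot (α : ℝ) : Matrix (Fin 3) (Fin 3) ℝ :=
  !![Real.cos α, -Real.sin α, 0;
     Real.sin α, Real.cos α, 0;
     0, 0, 1]

/-- Rotation about the x-axis by angle `δ`. -/
noncomputable def Phi (δ : ℝ) : Matrix (Fin 3) (Fin 3) ℝ :=
  !![1, 0, 0;
     0, Real.cos δ, -Real.sin δ;
     0, Real.sin δ, Real.cos δ]

/-!
`Φ` fixes the x-axis, so the right-hand side has x-component `cos α₄`, whatever `δ₁` is.
Pushing `e₁` through the five rotations on the left one at a time gives its x-component as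
the cubic polynomial in sines and cosines that appears in (C-5).
-/

theorem Arot_mulVec (α x y z : ℝ) :
    Arot α *ᵥ ![x, y, z] = ![cos α * x - sin α * y, sin α * x + cos α * y, z] := by
  ext i; fin_cases i <;> simp [Arot, vecHead, vecTail, mul_comm, sub_eq_add_neg]

theorem Phi_mulVec (δ x y z : ℝ) :
    Phi δ *ᵥ ![x, y, z] = ![x, cos δ * y - sin δ * z, sin δ * y + cos δ * z] := by
  ext i; fin_cases i <;> simp [Phi, vecHead, vecTail, mul_comm, sub_eq_add_neg]

theorem Phi_pi_sub_mulVec (δ x y z : ℝ) :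
    Phi (π - δ) *ᵥ ![x, y, z] = ![x, -cos δ * y - sin δ * z, sin δ * y - cos δ * z] := by
  rw [Phi_mulVec, cos_pi_sub, sin_pi_sub, neg_mul, neg_mul, ← sub_eq_add_neg]

theorem Phi_mulVec_zero (δ : ℝ) (v : Fin 3 → ℝ) : (Phi δ *ᵥ v) 0 = v 0 := by
  simp [Phi, mulVec, dotProduct, Fin.sum_univ_succ]

theorem Phi_sub_pi_mul_Arot_neg_mulVec_e₁_zero (α₄ δ₁ : ℝ) :
    ((Phi (δ₁ - π) * Arot (-α₄)) *ᵥ ![1, 0, 0]) 0 = cos α₄ := by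
  rw [← mulVec_mulVec, Phi_mulVec_zero, Arot_mulVec]
  simp

theorem cap_vertex_mulVec_e₁_zero (α₁ α₂ α₃ δ₂ δ₃ : ℝ) :
    ((Arot α₁ * Phi (π - δ₂) * Arot α₂ * Phi (π - δ₃) * Arot α₃) *ᵥ ![1, 0, 0]) 0 =
      cos α₁ * cos α₂ * cos α₃ + cos α₁ * sin α₂ * sin α₃ * cos δ₃
        + sin α₁ * sin α₂ * cos α₃ * cos δ₂ - sin α₁ * cos α₂ * sin α₃ * cos δ₂ * cos δ₃
        + sin α₁ * sin α₃ * sin δ₂ * sin δ₃ := by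
  simp only [← mulVec_mulVec, Arot_mulVec, Phi_pi_sub_mulVec]
  simp only [Matrix.cons_val_zero]
  ring

/-- Equating the x-components of the two rotation-sequence expressions for the
vertex `v₄` of a four-faced cap yields the deformation equation (C-5). -/
theorem stmt_14 (α₁ α₂ α₃ α₄ δ₁ δ₂ δ₃ : ℝ)
    (h : (Arot α₁ * Phi (π - δ₂) * Arot α₂ * Phi (π - δ₃) * Arot α₃).mulVec
        ![1, 0, 0] =
      (Phi (δ₁ - π) * Arot (-α₄)).mulVec ![1, 0, 0]) :
    Real.sin α₁ * Real.cos α₂ * Real.sin α₃ * Real.cos δ₂ * Real.cos δ₃ -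
      Real.sin α₁ * Real.sin α₃ * Real.sin δ₂ * Real.sin δ₃ -
      Real.sin α₁ * Real.sin α₂ * Real.cos α₃ * Real.cos δ₂ -
      Real.cos α₁ * Real.sin α₂ * Real.sin α₃ * Real.cos δ₃ +
      Real.cos α₄ - Real.cos α₁ * Real.cos α₂ * Real.cos α₃ = 0 := by
  have hx := congrFun h 0
  rw [cap_vertex_mulVec_e₁_zero, Phi_sub_pi_mul_Arot_neg_mulVec_e₁_zero] at hx
  linarith
end

section
/- Let δ, α, β, γ, ψ, φ ∈ ℝ with cos(ψ/2) ≠ 0 and cos(φ/2) ≠ 0, and set t = tan(φ/2), u = tan(ψ/2). Then sin δ cos α sin β cos ψ cos φ − sin δ sin β sin ψ sin φ − sin δ sin α cos β cos ψ − cos δ sin α sin β cos φ + cos γ − cos δ cos α cos β = 0 if and only if A t²u² + B t² + 2 C t u + D u² + E = 0, where A = cos γ − cos(α+β+δ), B = cos γ − cos(α+β−δ), C = −2 sin β sin δ, D = cos γ − cos(α−β+δ), E = cos γ − cos(α−β−δ). -/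
open Real

/-! The Weierstrass substitution `cos φ = (1 - t²)/(1 + t²)`, `sin φ = 2t/(1 + t²)` (and likewise
for `ψ` and `u`) turns the left-hand side of (C-5) into Bricard's quadratic divided by
`(1 + t²)(1 + u²)`, which is positive; so the two equations have the same solutions. -/

/-- Left-hand side of (C-5), with `cos ψ, sin ψ, cos φ, sin φ` as free variables. -/
noncomputable def capEquation (δ α β γ cψ sψ cφ sφ : ℝ) : ℝ :=
  sin δ * cos α * sin β * cψ * cφ - sin δ * sin β * sψ * sφ - sin δ * sin α * cos β * cψ -
    cos δ * sin α * sin β * cφ + cos γ - cos δ * cos α * cos β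

noncomputable def bricardQuadratic (δ α β γ t u : ℝ) : ℝ :=
  (cos γ - cos (α + β + δ)) * t ^ 2 * u ^ 2 + (cos γ - cos (α + β - δ)) * t ^ 2 +
    2 * (-(2 * sin β * sin δ)) * t * u + (cos γ - cos (α - β + δ)) * u ^ 2 +
    (cos γ - cos (α - β - δ))

theorem capEquation_weierstrass_mul (δ α β γ t u : ℝ) :
    capEquation δ α β γ ((1 - u ^ 2) / (1 + u ^ 2)) (2 * u / (1 + u ^ 2))
        ((1 - t ^ 2) / (1 + t ^ 2)) (2 * t / (1 + t ^ 2)) * ((1 + t ^ 2) * (1 + u ^ 2)) =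
      bricardQuadratic δ α β γ t u := by
  unfold capEquation bricardQuadratic
  simp only [cos_add, cos_sub, sin_add, sin_sub]
  field_simp
  ring

theorem Real.cos_ne_neg_one_of_cos_half_ne_zero {x : ℝ} (h : cos (x / 2) ≠ 0) : cos x ≠ -1 := by
  have hx : cos x = 2 * cos (x / 2) ^ 2 - 1 := by rw [← cos_two_mul, mul_div_cancel₀ x two_ne_zero]
  rw [hx]
  intro h'
  exact h (pow_eq_zero_iff two_ne_zero |>.mp (by linarith))

/-- Under the half-angle substitutions `t = tan (φ/2)`, `u = tan (ψ/2)`,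
equation (C-5) transforms into Bricard's quadratic tetrahedral equation
`A t²u² + B t² + 2 C t u + D u² + E = 0`. -/
theorem stmt_15 (δ α β γ ψ φ : ℝ)
    (hψ : Real.cos (ψ / 2) ≠ 0) (hφ : Real.cos (φ / 2) ≠ 0)
    (t u : ℝ) (ht : t = Real.tan (φ / 2)) (hu : u = Real.tan (ψ / 2)) :
    (Real.sin δ * Real.cos α * Real.sin β * Real.cos ψ * Real.cos φ -
      Real.sin δ * Real.sin β * Real.sin ψ * Real.sin φ -
      Real.sin δ * Real.sin α * Real.cos β * Real.cos ψ -
      Real.cos δ * Real.sin α * Real.sin β * Real.cos φ +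
      Real.cos γ - Real.cos δ * Real.cos α * Real.cos β = 0) ↔
    ((Real.cos γ - Real.cos (α + β + δ)) * t ^ 2 * u ^ 2 +
      (Real.cos γ - Real.cos (α + β - δ)) * t ^ 2 +
      2 * (-(2 * Real.sin β * Real.sin δ)) * t * u +
      (Real.cos γ - Real.cos (α - β + δ)) * u ^ 2 +
      (Real.cos γ - Real.cos (α - β - δ)) = 0) := by
  change capEquation δ α β γ (cos ψ) (sin ψ) (cos φ) (sin φ) = 0 ↔
    bricardQuadratic δ α β γ t u = 0
  rw [cos_eq_two_mul_tan_half_div_one_sub_tan_half_sq ψ (cos_ne_neg_one_of_cos_half_ne_zero hψ),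
    cos_eq_two_mul_tan_half_div_one_sub_tan_half_sq φ (cos_ne_neg_one_of_cos_half_ne_zero hφ),
    sin_eq_two_mul_tan_half_div_one_add_tan_half_sq ψ,
    sin_eq_two_mul_tan_half_div_one_add_tan_half_sq φ, ← ht, ← hu,
    ← capEquation_weierstrass_mul, mul_eq_zero, or_iff_left (by positivity)]
end

section
/- Let α_1, α_2, α_3, α_4, δ_1, δ_2, δ_4 ∈ ℝ, let A(α) and Φ(δ) be the 3×3 rotation matrices A(α) = [[cos α, −sin α, 0],[sin α, cos α, 0],[0,0,1]] and Φ(δ) = [[1,0,0],[0, cos δ, −sin δ],[0, sin δ, cos δ]], and let e_1 = (1,0,0). If A(α_1)·Φ(π−δ_2)·A(α_2) applied to e_1 equals Φ(δ_1−π)·A(−α_4)·Φ(δ_4−π)·A(−α_3) applied to e_1, then cos α_1 cos α_2 + sin α_1 sin α_2 cos δ_2 = cos α_3 cos α_4 + sin α_3 sin α_4 cos δ_4. -/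
open Real Matrix

theorem Phi_mul_mulVec_apply_zero (δ : ℝ) (M : Matrix (Fin 3) (Fin 3) ℝ) (v : Fin 3 → ℝ) :
    ((Phi δ * M) *ᵥ v) 0 = (M *ᵥ v) 0 := by
  simp [Phi, mulVec, dotProduct, mul_apply, Fin.sum_univ_succ]

theorem Arot_mul_Phi_mul_Arot_mulVec_e₁_apply_zero (α β δ : ℝ) :
    ((Arot α * Phi δ * Arot β) *ᵥ ![1, 0, 0]) 0 =
      Real.cos α * Real.cos β - Real.sin α * Real.sin β * Real.cos δ := by
  simp [Arot, Phi, mulVec, dotProduct, mul_apply, Fin.sum_univ_succ, sub_eq_add_neg,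
    mul_right_comm (Real.sin α)]

/-- Equating the x-components of the two rotation-sequence expressions for the
vertex `v₃` of a four-faced cap yields the linear relation (C-6) between the
opposite dihedral angles `δ₂` and `δ₄`. -/
theorem stmt_16 (α₁ α₂ α₃ α₄ δ₁ δ₂ δ₄ : ℝ)
    (h : (Arot α₁ * Phi (π - δ₂) * Arot α₂).mulVec ![1, 0, 0] =
      (Phi (δ₁ - π) * Arot (-α₄) * Phi (δ₄ - π) * Arot (-α₃)).mulVec
        ![1, 0, 0]) :
    Real.cos α₁ * Real.cos α₂ + Real.sin α₁ * Real.sin α₂ * Real.cos δ₂ =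
      Real.cos α₃ * Real.cos α₄ + Real.sin α₃ * Real.sin α₄ * Real.cos δ₄ := by
  have hx := congrFun h 0
  rw [Matrix.mul_assoc (Phi _) (Arot _), Matrix.mul_assoc (Phi _), Phi_mul_mulVec_apply_zero,
    Arot_mul_Phi_mul_Arot_mulVec_e₁_apply_zero, Arot_mul_Phi_mul_Arot_mulVec_e₁_apply_zero] at hx
  simp only [cos_pi_sub, cos_sub_pi, cos_neg, sin_neg] at hx
  linear_combination hx
end
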